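/- arXiv:1508.07539 — 7 statements merged into one kernel-verified Lean document; each statement's English description precedes it below -/
import Mathlib

section
/- Let Ω ⊆ ℝ^d be a compact set, let x_1,…,x_N ∈ Ω, and suppose the functions φ_1,…,φ_N : Ω → ℝ provide a stable local polynomial reproduction of degree m ∈ ℕ with constants C1, C2 and fill distance h, with δ := 2 C2 h. Then for every continuous function u : Ω → ℝ and every x ∈ Ω, |u(x) − ∑_{j=1}^N φ_j(x) u(x_j)| ≤ C1 · ω(u, δ), where ω(u, δ) := sup{ |u(y) − u(z)| : y, z ∈ Ω, ‖y − z‖₂ ≤ δ }. In particular, sup_{x∈Ω} |u(x) − ∑_{j=1}^N φ_j(x) u(x_j)| ≤ C1 ω(u, δ). -/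
/-!
Reproduction of constants gives `∑ⱼ φⱼ(x) = 1`, so the error at `x` is `∑ⱼ φⱼ(x) (u(x) - u(xⱼ))`.
By locality only the `xⱼ` with `‖x - xⱼ‖ ≤ δ` contribute, each difference is at most `ω(u, δ)`,
and stability bounds the weights by `C1`. Compactness of `Ω` and continuity of `u` keep the set
defining `ω(u, δ)` bounded, so that its `sSup` is a genuine supremum.
-/

open Finset

noncomputable def modulusOfContinuity {E : Type*} [SeminormedAddGroup E] (u : E → ℝ) (Ω : Set E)
    (δ : ℝ) : ℝ :=
  sSup {t | ∃ y ∈ Ω, ∃ z ∈ Ω, ‖y - z‖ ≤ δ ∧ t = |u y - u z|}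

section modulusOfContinuity

variable {E : Type*} [SeminormedAddGroup E] {u : E → ℝ} {Ω : Set E} {δ : ℝ}

theorem modulusOfContinuity_nonneg : 0 ≤ modulusOfContinuity u Ω δ :=
  Real.sSup_nonneg fun _ ⟨_, _, _, _, _, ht⟩ => ht ▸ abs_nonneg _

theorem abs_sub_le_modulusOfContinuity (hΩ : IsCompact Ω) (hu : ContinuousOn u Ω) {y z : E}
    (hy : y ∈ Ω) (hz : z ∈ Ω) (hyz : ‖y - z‖ ≤ δ) :
    |u y - u z| ≤ modulusOfContinuity u Ω δ := by
  have hcont : ContinuousOn (fun p : E × E => |u p.1 - u p.2|) (Ω ×ˢ Ω) :=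
    ((hu.comp continuousOn_fst fun _ hp => hp.1).sub
      (hu.comp continuousOn_snd fun _ hp => hp.2)).abs
  have hbdd : BddAbove {t | ∃ y ∈ Ω, ∃ z ∈ Ω, ‖y - z‖ ≤ δ ∧ t = |u y - u z|} :=
    ((hΩ.prod hΩ).image_of_continuousOn hcont).bddAbove.mono <| by
      rintro _ ⟨y, hy, z, hz, -, rfl⟩
      exact ⟨(y, z), ⟨hy, hz⟩, rfl⟩
  exact le_csSup hbdd ⟨y, hy, z, hz, hyz, rfl⟩

end modulusOfContinuity

theorem abs_sub_sum_mul_le_of_sum_eq_one {ι : Type*} [Fintype ι] {w a : ι → ℝ} {a₀ C ω : ℝ}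
    (hw : ∑ j, w j = 1) (hC : ∑ j, |w j| ≤ C) (hω : 0 ≤ ω)
    (ha : ∀ j, w j ≠ 0 → |a₀ - a j| ≤ ω) :
    |a₀ - ∑ j, w j * a j| ≤ C * ω := by
  have hdiff : a₀ - ∑ j, w j * a j = ∑ j, w j * (a₀ - a j) := by
    simp only [mul_sub, sum_sub_distrib, ← sum_mul, hw, one_mul]
  calc |a₀ - ∑ j, w j * a j|
      ≤ ∑ j, |w j| * |a₀ - a j| := by
        simpa only [hdiff, abs_mul] using abs_sum_le_sum_abs (fun j => w j * (a₀ - a j)) univ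
    _ ≤ ∑ j, |w j| * ω := sum_le_sum fun j _ => by
        by_cases hj : w j = 0
        · simp [hj]
        · exact mul_le_mul_of_nonneg_left (ha j hj) (abs_nonneg _)
    _ = (∑ j, |w j|) * ω := (sum_mul ..).symm
    _ ≤ C * ω := mul_le_mul_of_nonneg_right hC hω

theorem stmt_0_general
    {d N : ℕ} (Ω : Set (EuclideanSpace ℝ (Fin d))) (hΩ : IsCompact Ω)
    (x : Fin N → EuclideanSpace ℝ (Fin d)) (hx : ∀ j, x j ∈ Ω)
    (φ : Fin N → EuclideanSpace ℝ (Fin d) → ℝ)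
    (m : ℕ) (C1 δ : ℝ)
    (hC1 : 0 < C1)
    (hrep : ∀ p : MvPolynomial (Fin d) ℝ, p.totalDegree ≤ m →
      ∀ y ∈ Ω, ∑ j, φ j y * MvPolynomial.eval (fun i => x j i) p
        = MvPolynomial.eval (fun i => y i) p)
    (hstab : ∀ y ∈ Ω, ∑ j, |φ j y| ≤ C1)
    (hloc : ∀ j, ∀ y ∈ Ω, δ < ‖y - x j‖ → φ j y = 0)
    (u : EuclideanSpace ℝ (Fin d) → ℝ) (hu : ContinuousOn u Ω) :
    (∀ x₀ ∈ Ω, |u x₀ - ∑ j, φ j x₀ * u (x j)| ≤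
      C1 * sSup {t | ∃ y ∈ Ω, ∃ z ∈ Ω, ‖y - z‖ ≤ δ ∧ t = |u y - u z|}) ∧
    sSup ((fun x₀ => |u x₀ - ∑ j, φ j x₀ * u (x j)|) '' Ω) ≤
      C1 * sSup {t | ∃ y ∈ Ω, ∃ z ∈ Ω, ‖y - z‖ ≤ δ ∧ t = |u y - u z|} := by
  have hpoint : ∀ x₀ ∈ Ω,
      |u x₀ - ∑ j, φ j x₀ * u (x j)| ≤ C1 * modulusOfContinuity u Ω δ := by
    intro x₀ hx₀
    have hunity : ∑ j, φ j x₀ = 1 := by simpa using hrep 1 (by simp) x₀ hx₀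
    refine abs_sub_sum_mul_le_of_sum_eq_one hunity (hstab x₀ hx₀) modulusOfContinuity_nonneg
      fun j hj => abs_sub_le_modulusOfContinuity hΩ hu hx₀ (hx j) ?_
    exact not_lt.1 (mt (hloc j x₀ hx₀) hj)
  refine ⟨hpoint, Real.sSup_le (by rintro _ ⟨x₀, hx₀, rfl⟩; exact hpoint x₀ hx₀) ?_⟩
  exact mul_nonneg hC1.le modulusOfContinuity_nonneg

/-- uniform bound for the MLS approximation error of a continuous function
via the modulus of continuity, given a stable local polynomial reproduction. -/
theorem stmt_0
    {d N : ℕ} (Ω : Set (EuclideanSpace ℝ (Fin d))) (hΩ : IsCompact Ω)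
    (x : Fin N → EuclideanSpace ℝ (Fin d)) (hx : ∀ j, x j ∈ Ω)
    (φ : Fin N → EuclideanSpace ℝ (Fin d) → ℝ)
    (m : ℕ) (C1 C2 h δ : ℝ)
    (hC1 : 0 < C1) (hC2 : 0 < C2) (hh : 0 < h) (hδ : δ = 2 * C2 * h)
    (hrep : ∀ p : MvPolynomial (Fin d) ℝ, p.totalDegree ≤ m →
      ∀ y ∈ Ω, ∑ j, φ j y * MvPolynomial.eval (fun i => x j i) p
        = MvPolynomial.eval (fun i => y i) p)
    (hstab : ∀ y ∈ Ω, ∑ j, |φ j y| ≤ C1)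
    (hloc : ∀ j, ∀ y ∈ Ω, δ < ‖y - x j‖ → φ j y = 0)
    (u : EuclideanSpace ℝ (Fin d) → ℝ) (hu : ContinuousOn u Ω) :
    (∀ x₀ ∈ Ω, |u x₀ - ∑ j, φ j x₀ * u (x j)| ≤
      C1 * sSup {t | ∃ y ∈ Ω, ∃ z ∈ Ω, ‖y - z‖ ≤ δ ∧ t = |u y - u z|}) ∧
    sSup ((fun x₀ => |u x₀ - ∑ j, φ j x₀ * u (x j)|) '' Ω) ≤
      C1 * sSup {t | ∃ y ∈ Ω, ∃ z ∈ Ω, ‖y - z‖ ≤ δ ∧ t = |u y - u z|} :=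
  stmt_0_general Ω hΩ x hx φ m C1 δ hC1 hrep hstab hloc u hu
end

section
/- Let Ω ⊆ ℝ^d be a compact convex set, let x_1,…,x_N ∈ Ω, and suppose φ_1,…,φ_N : Ω → ℝ provide a stable local polynomial reproduction of degree m ≥ 1 with constants C1, C2 and fill distance h, with δ := 2 C2 h. Then there is a constant C > 0, depending only on m, d and C1 (not on u, N, or h), such that for every function u that is (m+1)-times continuously differentiable on a neighborhood of Ω with all derivatives of order m+1 bounded on Ω, sup_{x∈Ω} |u(x) − ∑_{j=1}^N φ_j(x) u(x_j)| ≤ C δ^{m+1} · sup_{x∈Ω} ‖D^{m+1}u(x)‖, where ‖D^{m+1}u(x)‖ denotes the norm of the (m+1)-st (iterated) derivative of u at x. -/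
/-!
Let `T` be the Taylor polynomial of degree `m` of `u` at `x₀`. It is a polynomial of degree `≤ m`
in the coordinates, so the `φ j` reproduce it, and `T x₀ = u x₀`; hence the error at `x₀` equals
`∑ j, φ j x₀ * (T (x j) - u (x j))`. Only nodes with `‖x₀ - x j‖ ≤ δ` contribute, and for them the
segment `[x₀, x j]` lies in `Ω` by convexity, so the Lagrange remainder along it bounds
`|T (x j) - u (x j)|` by `δ ^ (m + 1)` times the supremum of `‖D^{m+1} u‖`. The stability bound
`∑ j, |φ j x₀| ≤ C1` then gives the estimate with `C = C1`.
-/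

open Set MvPolynomial

theorem le_ciSup₂_of_forall_le {α β : Type*} [ConditionallyCompleteLattice α] {s : Set β}
    {f : β → α} {M : α} (hM : ∀ y ∈ s, f y ≤ M) {y : β} (hy : y ∈ s) :
    f y ≤ ⨆ z ∈ s, f z :=
  le_ciSup₂ (f := fun z (_ : z ∈ s) => f z)
    ⟨M, by rintro _ ⟨_, ⟨z, rfl⟩, ⟨hz, rfl⟩⟩; exact hM z hz⟩ y hy

theorem abs_sub_sum_mul_le_of_sum_mul_eq {ι : Type*} [Fintype ι] {w f g : ι → ℝ} {c ε : ℝ}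
    (hg : ∑ j, w j * g j = c) (hfg : ∀ j, w j ≠ 0 → |g j - f j| ≤ ε) :
    |c - ∑ j, w j * f j| ≤ (∑ j, |w j|) * ε := by
  calc |c - ∑ j, w j * f j| = |∑ j, w j * (g j - f j)| := by
        simp only [← hg, mul_sub, Finset.sum_sub_distrib]
    _ ≤ ∑ j, |w j| * |g j - f j| := by
        simpa only [abs_mul] using
          Finset.abs_sum_le_sum_abs (fun j => w j * (g j - f j)) Finset.univ
    _ ≤ ∑ j, |w j| * ε := by
        refine Finset.sum_le_sum fun j _ => ?_
        by_cases hj : w j = 0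
        · simp [hj]
        · exact mul_le_mul_of_nonneg_left (hfg j hj) (abs_nonneg _)
    _ = (∑ j, |w j|) * ε := by rw [Finset.sum_mul]

section Taylor

variable {E F : Type*} [NormedAddCommGroup E] [NormedSpace ℝ E]
  [NormedAddCommGroup F] [NormedSpace ℝ F]

noncomputable def taylorSum (u : E → F) (x₀ : E) (n : ℕ) (y : E) : F :=
  ∑ k ∈ Finset.range (n + 1), (k.factorial : ℝ)⁻¹ • iteratedFDeriv ℝ k u x₀ fun _ => y - x₀

theorem taylorSum_self (u : E → F) (x₀ : E) (n : ℕ) : taylorSum u x₀ n x₀ = u x₀ := by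
  rw [taylorSum, Finset.sum_eq_single_of_mem 0 (by simp)]
  · simp
  · intro k _ hk
    rw [sub_self, ContinuousMultilinearMap.map_coord_zero _ ⟨0, Nat.pos_of_ne_zero hk⟩ rfl,
      smul_zero]

theorem iteratedDerivWithin_comp_lineMap {n : ℕ} {u : E → F} {U : Set E} (hU : IsOpen U)
    (hu : ContDiffOn ℝ n u U) {x₀ y : E} (hseg : segment ℝ x₀ y ⊆ U) {k : ℕ} (hk : k ≤ n)
    {t : ℝ} (ht : t ∈ Icc 0 1) :
    iteratedDerivWithin k (u ∘ AffineMap.lineMap x₀ y) (Icc 0 1) t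
      = iteratedFDeriv ℝ k u (AffineMap.lineMap x₀ y t) fun _ => y - x₀ := by
  set L := ContinuousAffineMap.lineMap (R := ℝ) x₀ y
  have hL : ⇑L = AffineMap.lineMap x₀ y := ContinuousAffineMap.coe_lineMap_eq x₀ y
  have hIcc : Icc (0 : ℝ) 1 ⊆ L ⁻¹' U := by
    rw [← image_subset_iff, hL, ← segment_eq_image_lineMap]
    exact hseg
  have hseries := ((hu.ftaylorSeriesWithin hU.uniqueDiffOn).comp_continuousAffineMap L).mono hIcc
  rw [iteratedDerivWithin_eq_iteratedFDerivWithin, ← hL,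
    ← hseries.eq_iteratedFDerivWithin_of_uniqueDiffOn (mod_cast hk) (uniqueDiffOn_Icc one_pos) ht,
    ContinuousMultilinearMap.compContinuousLinearMap_apply, ftaylorSeriesWithin,
    iteratedFDerivWithin_of_isOpen k hU (hIcc ht)]
  simp [L]

theorem norm_sub_taylorSum_le {n : ℕ} {u : E → F} {U : Set E} (hU : IsOpen U)
    (hu : ContDiffOn ℝ (n + 1 : ℕ) u U) {x₀ y : E} (hseg : segment ℝ x₀ y ⊆ U) {C : ℝ}
    (hC : ∀ z ∈ segment ℝ x₀ y, ‖iteratedFDeriv ℝ (n + 1) u z‖ ≤ C) :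
    ‖u y - taylorSum u x₀ n y‖ ≤ C * ‖y - x₀‖ ^ (n + 1) / n.factorial := by
  set g := u ∘ AffineMap.lineMap (k := ℝ) x₀ y
  have hIcc : MapsTo (AffineMap.lineMap (k := ℝ) x₀ y) (Icc (0 : ℝ) 1) (segment ℝ x₀ y) := by
    rw [segment_eq_image_lineMap]
    exact mapsTo_image _ _
  have hg : ContDiffOn ℝ (n + 1 : ℕ) g (Icc 0 1) :=
    hu.comp ((ContinuousAffineMap.lineMap x₀ y).contDiff.contDiffOn.congr fun t _ => by
      rw [ContinuousAffineMap.coe_lineMap_eq]) (hIcc.mono_right hseg)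
  have hgC : ∀ t ∈ Icc (0 : ℝ) 1,
      ‖iteratedDerivWithin (n + 1) g (Icc 0 1) t‖ ≤ C * ‖y - x₀‖ ^ (n + 1) := by
    intro t ht
    rw [iteratedDerivWithin_comp_lineMap hU hu hseg le_rfl ht]
    calc _ ≤ ‖iteratedFDeriv ℝ (n + 1) u (AffineMap.lineMap x₀ y t)‖
            * ∏ _ : Fin (n + 1), ‖y - x₀‖ :=
          ContinuousMultilinearMap.le_opNorm _ _
      _ ≤ C * ‖y - x₀‖ ^ (n + 1) := by
          rw [Finset.prod_const, Finset.card_univ, Fintype.card_fin]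
          exact mul_le_mul_of_nonneg_right (hC _ (hIcc ht)) (by positivity)
  have htaylor : taylorWithinEval g n (Icc 0 1) 0 1 = taylorSum u x₀ n y := by
    rw [taylor_within_apply, taylorSum]
    refine Finset.sum_congr rfl fun k hk => ?_
    rw [iteratedDerivWithin_comp_lineMap hU hu hseg
      (Nat.le_succ_of_le (by simpa [Nat.lt_succ_iff] using hk))
      (left_mem_Icc.mpr zero_le_one)]
    simp
  have := taylor_mean_remainder_bound zero_le_one (mod_cast hg) (right_mem_Icc.mpr zero_le_one) hgC
  simpa [g, htaylor] using this

theorem norm_sub_taylorSum_le_of_convex {n : ℕ} {u : E → F} {s U : Set E} (hU : IsOpen U)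
    (hsU : s ⊆ U) (hs : Convex ℝ s) (hu : ContDiffOn ℝ (n + 1 : ℕ) u U) {C : ℝ}
    (hC : ∀ z ∈ s, ‖iteratedFDeriv ℝ (n + 1) u z‖ ≤ C) {x₀ y : E} (hx₀ : x₀ ∈ s) (hy : y ∈ s) :
    ‖u y - taylorSum u x₀ n y‖ ≤ C * ‖y - x₀‖ ^ (n + 1) := by
  have hseg := hs.segment_subset hx₀ hy
  have hC0 : 0 ≤ C := (norm_nonneg _).trans (hC x₀ hx₀)
  calc _ ≤ C * ‖y - x₀‖ ^ (n + 1) / n.factorial :=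
        norm_sub_taylorSum_le hU hu (hseg.trans hsU) fun z hz => hC z (hseg hz)
    _ ≤ C * ‖y - x₀‖ ^ (n + 1) :=
        div_le_self (by positivity) (mod_cast Nat.one_le_iff_ne_zero.mpr n.factorial_ne_zero)

end Taylor

theorem ContinuousMultilinearMap.exists_mvPolynomial_eval_eq_apply_sub {ι : Type*} [Fintype ι]
    {k : ℕ} (f : ContinuousMultilinearMap ℝ (fun _ : Fin k => EuclideanSpace ℝ ι) ℝ)
    (x₀ : EuclideanSpace ℝ ι) :
    ∃ P : MvPolynomial ι ℝ, P.totalDegree ≤ k ∧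
      ∀ y : EuclideanSpace ℝ ι, eval (fun i => y i) P = f fun _ => y - x₀ := by
  classical
  set b := EuclideanSpace.basisFun ι ℝ
  refine ⟨∑ r : Fin k → ι, C (f fun t => b (r t)) * ∏ t, (X (r t) - C (x₀ (r t))), ?_, ?_⟩
  · refine (totalDegree_finsetSum _ _).trans (Finset.sup_le fun r _ => ?_)
    refine (totalDegree_mul _ _).trans ?_
    rw [totalDegree_C, zero_add]
    refine (totalDegree_finsetProd _ _).trans ?_
    calc ∑ t, (X (r t) - C (x₀ (r t)) : MvPolynomial ι ℝ).totalDegree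
        ≤ ∑ _t : Fin k, 1 := Finset.sum_le_sum fun t _ =>
          (totalDegree_sub_C_le _ _).trans (totalDegree_X _).le
      _ = k := by simp
  · intro y
    have hy : y - x₀ = ∑ i, (y i - x₀ i) • b i := by
      simpa [b] using (b.sum_repr (y - x₀)).symm
    rw [hy, f.map_sum]
    simp only [eval_sum, eval_mul, eval_C, eval_prod, eval_sub, eval_X, f.map_smul_univ,
      smul_eq_mul]
    exact Finset.sum_congr rfl fun r _ => mul_comm _ _

theorem exists_mvPolynomial_eval_eq_taylorSum {ι : Type*} [Fintype ι]
    (u : EuclideanSpace ℝ ι → ℝ) (x₀ : EuclideanSpace ℝ ι) (n : ℕ) :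
    ∃ P : MvPolynomial ι ℝ, P.totalDegree ≤ n ∧
      ∀ y : EuclideanSpace ℝ ι, eval (fun i => y i) P = taylorSum u x₀ n y := by
  choose P hPdeg hP using fun k =>
    (iteratedFDeriv ℝ k u x₀).exists_mvPolynomial_eval_eq_apply_sub x₀
  refine ⟨∑ k ∈ Finset.range (n + 1), C (k.factorial : ℝ)⁻¹ * P k, ?_, fun y => ?_⟩
  · refine (totalDegree_finsetSum _ _).trans (Finset.sup_le fun k hk => ?_)
    refine (totalDegree_mul _ _).trans ?_
    rw [totalDegree_C, zero_add]
    exact (hPdeg k).trans (by simpa [Nat.lt_succ_iff] using hk)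
  · simp [taylorSum, hP]

theorem stmt_2_general
    (d m : ℕ) (C1 : ℝ) (hC1 : 0 < C1) :
    ∃ C > (0 : ℝ), ∀ (N : ℕ) (Ω : Set (EuclideanSpace ℝ (Fin d))),
      IsCompact Ω → Convex ℝ Ω →
      ∀ (x : Fin N → EuclideanSpace ℝ (Fin d)), (∀ j, x j ∈ Ω) →
      ∀ (φ : Fin N → EuclideanSpace ℝ (Fin d) → ℝ) (C2 h δ : ℝ),
        0 < C2 → 0 < h → δ = 2 * C2 * h →
        (∀ p : MvPolynomial (Fin d) ℝ, p.totalDegree ≤ m →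
          ∀ y ∈ Ω, ∑ j, φ j y * MvPolynomial.eval (fun i => x j i) p
            = MvPolynomial.eval (fun i => y i) p) →
        (∀ y ∈ Ω, ∑ j, |φ j y| ≤ C1) →
        (∀ j, ∀ y ∈ Ω, δ < ‖y - x j‖ → φ j y = 0) →
        ∀ u : EuclideanSpace ℝ (Fin d) → ℝ,
          (∃ U : Set (EuclideanSpace ℝ (Fin d)), IsOpen U ∧ Ω ⊆ U ∧
            ContDiffOn ℝ (m + 1 : ℕ) u U) →
          (∃ M : ℝ, ∀ y ∈ Ω, ‖iteratedFDeriv ℝ (m + 1) u y‖ ≤ M) →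
          ∀ x₀ ∈ Ω, |u x₀ - ∑ j, φ j x₀ * u (x j)| ≤
            C * δ ^ (m + 1) * (⨆ y ∈ Ω, ‖iteratedFDeriv ℝ (m + 1) u y‖) := by
  refine ⟨C1, hC1, fun N Ω _ hΩ x hx φ C2 h δ hC2 hh hδ hrep hstab hsupp u ⟨U, hU, hΩU, hu⟩
    ⟨M, hM⟩ x₀ hx₀ => ?_⟩
  set S := ⨆ y ∈ Ω, ‖iteratedFDeriv ℝ (m + 1) u y‖
  have hS : ∀ y ∈ Ω, ‖iteratedFDeriv ℝ (m + 1) u y‖ ≤ S := fun y hy => le_ciSup₂_of_forall_le hM hy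
  have hδ0 : 0 ≤ δ := by rw [hδ]; positivity
  have hS0 : 0 ≤ S := (norm_nonneg _).trans (hS x₀ hx₀)
  obtain ⟨P, hPdeg, hP⟩ := exists_mvPolynomial_eval_eq_taylorSum u x₀ m
  have hT : ∑ j, φ j x₀ * taylorSum u x₀ m (x j) = u x₀ := by
    simpa only [hP, taylorSum_self] using hrep P hPdeg x₀ hx₀
  have hlocal : ∀ j, φ j x₀ ≠ 0 → |taylorSum u x₀ m (x j) - u (x j)| ≤ S * δ ^ (m + 1) := by
    intro j hj
    have hdist : ‖x j - x₀‖ ≤ δ := by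
      rw [norm_sub_rev]
      exact not_lt.mp fun hlt => hj (hsupp j x₀ hx₀ hlt)
    rw [abs_sub_comm, ← Real.norm_eq_abs]
    calc _ ≤ S * ‖x j - x₀‖ ^ (m + 1) := norm_sub_taylorSum_le_of_convex hU hΩU hΩ hu hS hx₀ (hx j)
      _ ≤ S * δ ^ (m + 1) := by gcongr
  calc _ ≤ (∑ j, |φ j x₀|) * (S * δ ^ (m + 1)) := abs_sub_sum_mul_le_of_sum_mul_eq hT hlocal
    _ ≤ C1 * (S * δ ^ (m + 1)) := by gcongr; exact hstab x₀ hx₀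
    _ = C1 * δ ^ (m + 1) * S := by ring

/-- MLS error estimate of order δ^{m+1} for C^{m+1} functions on compact convex
domains, with a constant depending only on m, d and C1. -/
theorem stmt_2
    (d m : ℕ) (hd : 0 < d) (hm : 1 ≤ m) (C1 : ℝ) (hC1 : 0 < C1) :
    ∃ C > (0 : ℝ), ∀ (N : ℕ) (Ω : Set (EuclideanSpace ℝ (Fin d))),
      IsCompact Ω → Convex ℝ Ω →
      ∀ (x : Fin N → EuclideanSpace ℝ (Fin d)), (∀ j, x j ∈ Ω) →
      ∀ (φ : Fin N → EuclideanSpace ℝ (Fin d) → ℝ) (C2 h δ : ℝ),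
        0 < C2 → 0 < h → δ = 2 * C2 * h →
        (∀ p : MvPolynomial (Fin d) ℝ, p.totalDegree ≤ m →
          ∀ y ∈ Ω, ∑ j, φ j y * MvPolynomial.eval (fun i => x j i) p
            = MvPolynomial.eval (fun i => y i) p) →
        (∀ y ∈ Ω, ∑ j, |φ j y| ≤ C1) →
        (∀ j, ∀ y ∈ Ω, δ < ‖y - x j‖ → φ j y = 0) →
        ∀ u : EuclideanSpace ℝ (Fin d) → ℝ,
          (∃ U : Set (EuclideanSpace ℝ (Fin d)), IsOpen U ∧ Ω ⊆ U ∧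
            ContDiffOn ℝ (m + 1 : ℕ) u U) →
          (∃ M : ℝ, ∀ y ∈ Ω, ‖iteratedFDeriv ℝ (m + 1) u y‖ ≤ M) →
          ∀ x₀ ∈ Ω, |u x₀ - ∑ j, φ j x₀ * u (x j)| ≤
            C * δ ^ (m + 1) * (⨆ y ∈ Ω, ‖iteratedFDeriv ℝ (m + 1) u y‖) :=
  stmt_2_general d m C1 hC1
end

section
/- Let X be a real Banach space, let F be a bounded linear operator on X, and let (F_N)_{N≥1} be a collectively compact family of bounded linear operators on X such that F_N u → F u in norm for every u ∈ X. Then ‖(F − F_N) F‖ → 0 and ‖(F − F_N) F_N‖ → 0 as N → ∞, where ‖·‖ denotes the operator norm. -/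
/-!
By Banach–Steinhaus the `F_N` are uniformly bounded, hence equicontinuous, so their pointwise
convergence to `F` is uniform on the compact set `K`, the closure of the images of the unit ball
under the `F_N`. Both `F` and every `F_N` map the unit sphere into `K`, so
`‖(F - F_N) F‖` and `‖(F - F_N) F_N‖` are bounded by `sup_{v ∈ K} ‖F v - F_N v‖ → 0`.
-/

open Filter Topology Metric Set

theorem EquicontinuousOn.tendstoUniformlyOn_of_tendsto {ι X α : Type*} [TopologicalSpace X]
    [UniformSpace α] {F : ι → X → α} {f : X → α} {l : Filter ι} {K : Set X}
    (hK : IsCompact K) (hF : EquicontinuousOn F K)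
    (h : ∀ x ∈ K, Tendsto (F · x) l (𝓝 (f x))) : TendstoUniformlyOn F f l K := by
  have : CompactSpace K := isCompact_iff_compactSpace.mp hK
  rw [tendstoUniformlyOn_iff_tendstoUniformly_comp_coe]
  exact UniformFun.tendsto_iff_tendstoUniformly.1 <|
    ((equicontinuous_restrict_iff _).mpr hF).tendsto_uniformFun_iff_pi l _ |>.2 <|
      tendsto_pi_nhds.2 fun x => h x x.2

namespace ContinuousLinearMap

variable {𝕜 E F : Type*} [NontriviallyNormedField 𝕜]
  [NormedAddCommGroup E] [NormedSpace 𝕜 E] [NormedAddCommGroup F] [NormedSpace 𝕜 F]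

theorem tendstoUniformlyOn_of_tendsto [CompleteSpace E] {G : ℕ → E →L[𝕜] F} {g : E →L[𝕜] F}
    (h : ∀ x, Tendsto (G · x) atTop (𝓝 (g x))) {K : Set E} (hK : IsCompact K) :
    TendstoUniformlyOn (fun n => ⇑(G n)) g atTop K := by
  have hbdd : ∃ C, ∀ n, ‖G n‖ ≤ C :=
    banach_steinhaus fun x => let ⟨C, hC⟩ := (h x).norm.bddAbove_range; ⟨C, fun n => hC ⟨n, rfl⟩⟩
  have heq : Equicontinuous ((↑) ∘ G) := ((NormedSpace.equicontinuous_TFAE G).out 5 1).1 hbdd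
  exact heq.equicontinuousOn K |>.tendstoUniformlyOn_of_tendsto hK fun x _ => h x

theorem tendsto_opNorm_sub_comp_of_tendstoUniformlyOn {ι E' : Type*} [NormedAlgebra ℝ 𝕜]
    [NormedAddCommGroup E'] [NormedSpace 𝕜 E'] {l : Filter ι}
    {G : ι → E →L[𝕜] F} {g : E →L[𝕜] F} {H : ι → E' →L[𝕜] E} {K : Set E}
    (hG : TendstoUniformlyOn (fun i => ⇑(G i)) g l K)
    (hH : ∀ᶠ i in l, MapsTo (H i) (sphere 0 1) K) :
    Tendsto (fun i => ‖(g - G i).comp (H i)‖) l (𝓝 0) := by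
  rw [NormedAddGroup.tendsto_nhds_zero]
  intro ε hε
  filter_upwards [tendstoUniformlyOn_iff.1 hG (ε / 2) (half_pos hε), hH] with i hi hHi
  rw [norm_norm]
  refine lt_of_le_of_lt (opNorm_le_of_unit_norm (half_pos hε).le fun x hx => ?_) (half_lt_self hε)
  simpa [dist_eq_norm] using (hi _ (hHi (mem_sphere_zero_iff_norm.2 hx))).le

end ContinuousLinearMap

/-- for a collectively compact family of pointwise convergent operators F_N
with limit F, both ‖(F − F_N)F‖ → 0 and ‖(F − F_N)F_N‖ → 0 in operator norm. -/
theorem stmt_7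
    {X : Type*} [NormedAddCommGroup X] [NormedSpace ℝ X] [CompleteSpace X]
    (F : X →L[ℝ] X) (Fn : ℕ → X →L[ℝ] X)
    (hcc : IsCompact (closure {v : X | ∃ N ≥ 1, ∃ u : X, ‖u‖ ≤ 1 ∧ v = Fn N u}))
    (hconv : ∀ u : X, Tendsto (fun N => Fn N u) atTop (𝓝 (F u))) :
    Tendsto (fun N => ‖(F - Fn N).comp F‖) atTop (𝓝 0) ∧
    Tendsto (fun N => ‖(F - Fn N).comp (Fn N)‖) atTop (𝓝 0) := by
  set K := closure {v : X | ∃ N ≥ 1, ∃ u : X, ‖u‖ ≤ 1 ∧ v = Fn N u}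
  have hunif := ContinuousLinearMap.tendstoUniformlyOn_of_tendsto hconv hcc
  have hFnK : ∀ N ≥ 1, MapsTo (Fn N) (sphere 0 1) K := fun N hN u hu =>
    subset_closure ⟨N, hN, u, (mem_sphere_zero_iff_norm.1 hu).le, rfl⟩
  have hFK : MapsTo F (sphere 0 1) K := fun u hu =>
    isClosed_closure.mem_of_tendsto (hconv u) <|
      (eventually_ge_atTop 1).mono fun N hN => hFnK N hN hu
  exact ⟨ContinuousLinearMap.tendsto_opNorm_sub_comp_of_tendstoUniformlyOn hunif
      (.of_forall fun _ => hFK),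
    ContinuousLinearMap.tendsto_opNorm_sub_comp_of_tendstoUniformlyOn hunif
      (eventually_atTop.2 ⟨1, hFnK⟩)⟩
end

section
/- Let X be a real Banach space, let S and T be bounded linear operators on X with S compact, and let λ ≠ 0 be a real number. Assume λI − T is a bijection of X onto X (so (λI − T)^{-1} is a bounded operator by the open mapping theorem), and assume ‖(T − S) S‖ < |λ| / ‖(λI − T)^{-1}‖. Then λI − S is a bijection of X onto X, (λI − S)^{-1} is a bounded linear operator, and ‖(λI − S)^{-1}‖ ≤ (1 + ‖(λI − T)^{-1}‖ · ‖S‖) / (|λ| − ‖(λI − T)^{-1}‖ · ‖(T − S) S‖). -/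
/-!
With `E := Tinv (T - S) S`, the left inverse `Tinv` of `λ - T` gives the factorisation
`(1 + Tinv S)(λ - S) = λ + E`, and `‖E‖ ≤ ‖Tinv‖ ‖(T - S) S‖ < |λ|`. Hence
`(|λ| - ‖E‖) ‖x‖ ≤ ‖1 + Tinv S‖ ‖(λ - S) x‖`, so `λ - S` is injective; by the Fredholm
alternative for the compact operator `S` it is then invertible, and the same estimate applied
to `x = (λ - S)⁻¹ y` bounds the norm of the inverse.
-/

open Function

theorem one_add_mul_mul_smul_one_sub_eq {𝕜 R : Type*} [CommRing 𝕜] [Ring R] [Algebra 𝕜 R]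
    {b s t : R} {μ : 𝕜} (hb : b * (μ • 1 - t) = 1) :
    (1 + b * s) * (μ • 1 - s) = μ • 1 + b * ((t - s) * s) := by
  have hbs : μ • (b * s) = s + b * (t * s) := by
    have := congrArg (· * s) hb
    simp only [mul_sub, sub_mul, one_mul, mul_smul_comm, smul_mul_assoc, mul_one,
      mul_assoc] at this
    exact sub_eq_iff_eq_add.mp this
  simp only [add_mul, mul_sub, sub_mul, one_mul, mul_smul_comm, mul_one, mul_assoc, smul_add, hbs]
  abel

namespace ContinuousLinearMap

variable {𝕜 X : Type*} [NontriviallyNormedField 𝕜] [NormedAddCommGroup X] [NormedSpace 𝕜 X]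
  {a c e : X →L[𝕜] X} {μ : 𝕜}

theorem sub_norm_mul_norm_le_of_mul_eq_smul_one_add (h : c * a = μ • 1 + e) (x : X) :
    (‖μ‖ - ‖e‖) * ‖x‖ ≤ ‖c‖ * ‖a x‖ := by
  have hx : μ • x = c (a x) - e x := by
    rw [← mul_apply_eq_comp, h]
    simp
  have := norm_sub_le (c (a x)) (e x)
  rw [← hx, norm_smul] at this
  nlinarith [c.le_opNorm (a x), e.le_opNorm x]

theorem injective_of_mul_eq_smul_one_add (h : c * a = μ • 1 + e) (he : ‖e‖ < ‖μ‖) :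
    Injective a := by
  refine (injective_iff_map_eq_zero a).2 fun x hx => norm_le_zero_iff.1 ?_
  have := sub_norm_mul_norm_le_of_mul_eq_smul_one_add h x
  rw [hx, norm_zero, mul_zero] at this
  nlinarith [norm_nonneg x]

theorem norm_le_of_mul_eq_smul_one_add (h : c * a = μ • 1 + e) (he : ‖e‖ < ‖μ‖)
    {y : X →L[𝕜] X} (hy : a * y = 1) : ‖y‖ ≤ ‖c‖ / (‖μ‖ - ‖e‖) := by
  have hpos : 0 < ‖μ‖ - ‖e‖ := sub_pos.2 he
  refine opNorm_le_bound _ (by positivity) fun x => ?_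
  rw [div_mul_eq_mul_div, le_div_iff₀ hpos, mul_comm]
  have hx : a (y x) = x := by rw [← mul_apply_eq_comp, hy, one_apply_eq_self]
  simpa [hx] using sub_norm_mul_norm_le_of_mul_eq_smul_one_add h (y x)

end ContinuousLinearMap

theorem IsCompactOperator.isUnit_smul_one_sub_of_injective {𝕜 X : Type*}
    [NontriviallyNormedField 𝕜] [NormedAddCommGroup X] [NormedSpace 𝕜 X] [CompleteSpace X]
    {S : X →L[𝕜] X} {μ : 𝕜} (hS : IsCompactOperator S) (hμ : μ ≠ 0)
    (hinj : Injective ⇑(μ • (1 : X →L[𝕜] X) - S)) : IsUnit (μ • (1 : X →L[𝕜] X) - S) := by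
  rcases hS.hasEigenvalue_or_mem_resolventSet hμ with hev | hres
  · obtain ⟨x, hx⟩ := hev.exists_hasEigenvector
    refine absurd ((injective_iff_map_eq_zero _).1 hinj x ?_) hx.2
    rw [sub_apply, smul_apply, one_apply_eq_self, show S x = μ • x from hx.apply_eq_smul,
      sub_self]
  · rwa [spectrum.mem_resolventSet_iff, Algebra.algebraMap_eq_smul_one] at hres

theorem stmt_8_general
    {X : Type*} [NormedAddCommGroup X] [NormedSpace ℝ X] [CompleteSpace X]
    (S T : X →L[ℝ] X) (hS : IsCompactOperator (⇑S))
    (lam : ℝ)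
    (Tinv : X →L[ℝ] X)
    (hT2 : Tinv.comp (lam • ContinuousLinearMap.id ℝ X - T) = ContinuousLinearMap.id ℝ X)
    (hsmall : ‖(T - S).comp S‖ < |lam| / ‖Tinv‖) :
    Function.Bijective ⇑(lam • ContinuousLinearMap.id ℝ X - S) ∧
    ∃ Sinv : X →L[ℝ] X,
      (lam • ContinuousLinearMap.id ℝ X - S).comp Sinv = ContinuousLinearMap.id ℝ X ∧
      Sinv.comp (lam • ContinuousLinearMap.id ℝ X - S) = ContinuousLinearMap.id ℝ X ∧
      ‖Sinv‖ ≤ (1 + ‖Tinv‖ * ‖S‖) / (|lam| - ‖Tinv‖ * ‖(T - S).comp S‖) := by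
  simp only [← ContinuousLinearMap.one_def, ← ContinuousLinearMap.mul_def] at hT2 hsmall ⊢
  have hTinv : 0 < ‖Tinv‖ := by
    by_contra! h
    rw [le_antisymm h (norm_nonneg _), div_zero] at hsmall
    exact (norm_nonneg _).not_gt hsmall
  have hden : ‖Tinv‖ * ‖(T - S) * S‖ < |lam| := by rwa [lt_div_iff₀' hTinv] at hsmall
  have hfactor := one_add_mul_mul_smul_one_sub_eq (s := S) hT2
  have hE : ‖Tinv * ((T - S) * S)‖ < ‖lam‖ := (norm_mul_le _ _).trans_lt hden
  have hlam : lam ≠ 0 := norm_pos_iff.1 ((norm_nonneg _).trans_lt hE)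
  obtain ⟨u, hu⟩ := hS.isUnit_smul_one_sub_of_injective hlam
    (ContinuousLinearMap.injective_of_mul_eq_smul_one_add hfactor hE)
  refine ⟨ContinuousLinearMap.isUnit_iff_bijective.1 ⟨u, hu⟩, ↑u⁻¹, by simp [← hu],
    by simp [← hu], ?_⟩
  have hC : ‖1 + Tinv * S‖ ≤ 1 + ‖Tinv‖ * ‖S‖ :=
    (norm_add_le _ _).trans (add_le_add ContinuousLinearMap.norm_id_le (norm_mul_le Tinv S))
  calc ‖(↑u⁻¹ : X →L[ℝ] X)‖ ≤ ‖1 + Tinv * S‖ / (‖lam‖ - ‖Tinv * ((T - S) * S)‖) :=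
        ContinuousLinearMap.norm_le_of_mul_eq_smul_one_add hfactor hE (by simp [← hu])
    _ ≤ (1 + ‖Tinv‖ * ‖S‖) / (|lam| - ‖Tinv‖ * ‖(T - S) * S‖) := by
        rw [Real.norm_eq_abs] at hE ⊢
        exact div_le_div₀ (by positivity) hC (by linarith)
          (by linarith [norm_mul_le Tinv ((T - S) * S)])

/-- Atkinson, Theorem 4.1.1, existence part: if λI − T is invertible with
bounded inverse and ‖(T − S)S‖ < |λ|/‖(λI − T)⁻¹‖ with S compact, then λI − S is
invertible with bounded inverse, and the stated norm bound holds. -/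
theorem stmt_8
    {X : Type*} [NormedAddCommGroup X] [NormedSpace ℝ X] [CompleteSpace X]
    (S T : X →L[ℝ] X) (hS : IsCompactOperator (⇑S))
    (lam : ℝ) (hlam : lam ≠ 0)
    (Tinv : X →L[ℝ] X)
    (hT1 : (lam • ContinuousLinearMap.id ℝ X - T).comp Tinv = ContinuousLinearMap.id ℝ X)
    (hT2 : Tinv.comp (lam • ContinuousLinearMap.id ℝ X - T) = ContinuousLinearMap.id ℝ X)
    (hsmall : ‖(T - S).comp S‖ < |lam| / ‖Tinv‖) :
    Function.Bijective ⇑(lam • ContinuousLinearMap.id ℝ X - S) ∧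
    ∃ Sinv : X →L[ℝ] X,
      (lam • ContinuousLinearMap.id ℝ X - S).comp Sinv = ContinuousLinearMap.id ℝ X ∧
      Sinv.comp (lam • ContinuousLinearMap.id ℝ X - S) = ContinuousLinearMap.id ℝ X ∧
      ‖Sinv‖ ≤ (1 + ‖Tinv‖ * ‖S‖) / (|lam| - ‖Tinv‖ * ‖(T - S).comp S‖) :=
  stmt_8_general S T hS lam Tinv hT2 hsmall
end

section
/- Let X be a real Banach space, let F be a compact bounded linear operator on X, let λ ≠ 0 be a real number, and assume λI − F is a bijection of X onto X. Let (F_N)_{N≥1} be a collectively compact family of bounded linear operators on X with F_N u → F u for all u ∈ X, and let (P_N)_{N≥1} be bounded linear operators on X with c_P := sup_N ‖P_N‖ < ∞ and P_N u → u for all u ∈ X. Then there exist N₀ ∈ ℕ and a constant c_I < ∞ such that for all N ≥ N₀ the operator λI − F_N P_N is a bijection of X onto X and ‖(λI − F_N P_N)^{-1}‖ ≤ c_I. -/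
/-!
With `G_N = F_N P_N` and `S = (λ - F)⁻¹`, the operator `B_N = λ⁻¹ (1 + S G_N)` is an approximate
inverse of `λ - G_N`: the defects are `λ⁻¹ (G_N - F) S G_N` and `λ⁻¹ S (G_N - F) G_N`. The `G_N`
are uniformly bounded (Banach–Steinhaus) and converge pointwise to `F`, hence uniformly on compact
sets; as they map the unit ball into one compact set, both defects tend to `0` in operator norm.
Once they are below `1/2`, Neumann series invert `λ - G_N` with `‖(λ - G_N)⁻¹‖ ≤ 2 ‖B_N‖`.
-/

open Filter Topology Metric Set Pointwise

theorem smul_one_sub_mul_smul_one_add {𝕜 R : Type*} [Field 𝕜] [Ring R] [Algebra 𝕜 R]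
    {c : 𝕜} (hc : c ≠ 0) {f s : R} (h : (c • 1 - f) * s = 1) (g : R) :
    (c • 1 - g) * (c⁻¹ • (1 + s * g)) = 1 - c⁻¹ • ((g - f) * s * g) := by
  have hs : c • s = 1 + f * s := by
    rw [← h, sub_mul, smul_one_mul]; abel
  have hprod : (c • 1 - g) * (1 + s * g) = c • 1 - (g - f) * s * g := by
    calc (c • 1 - g) * (1 + s * g) = c • 1 - g + (c • s) * g - g * s * g := by
          simp only [sub_mul, mul_add, mul_one, smul_mul_assoc, one_mul, mul_assoc]
          abel
      _ = c • 1 - (g - f) * s * g := by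
          rw [hs]; simp only [add_mul, sub_mul, one_mul]; abel
  rw [mul_smul_comm, hprod, smul_sub, smul_smul, inv_mul_cancel₀ hc, one_smul]

theorem smul_one_add_mul_smul_one_sub {𝕜 R : Type*} [Field 𝕜] [Ring R] [Algebra 𝕜 R]
    {c : 𝕜} (hc : c ≠ 0) {f s : R} (h : s * (c • 1 - f) = 1) (g : R) :
    c⁻¹ • (1 + s * g) * (c • 1 - g) = 1 - c⁻¹ • (s * ((g - f) * g)) := by
  have hs : c • s = 1 + s * f := by
    rw [← h, mul_sub, mul_smul_one]; abel
  have hprod : (1 + s * g) * (c • 1 - g) = c • 1 - s * ((g - f) * g) := by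
    calc (1 + s * g) * (c • 1 - g) = c • 1 - g + (c • s) * g - s * (g * g) := by
          simp only [add_mul, mul_sub, one_mul, mul_smul_one, smul_mul_assoc, mul_assoc, smul_add]
          abel
      _ = c • 1 - s * ((g - f) * g) := by
          rw [hs]; simp only [add_mul, mul_sub, sub_mul, one_mul, mul_assoc]; abel
  rw [smul_mul_assoc, hprod, smul_sub, smul_smul, inv_mul_cancel₀ hc, one_smul]

theorem exists_unit_eq_and_norm_inv_le_of_mul_eq_one_sub {R : Type*} [NormedRing R]
    [CompleteSpace R] {a b d d' : R} (hab : a * b = 1 - d) (hba : b * a = 1 - d')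
    (hd : ‖d‖ ≤ 1 / 2) (hd' : ‖d'‖ < 1) :
    ∃ u : Rˣ, (u : R) = a ∧ ‖(↑u⁻¹ : R)‖ ≤ 2 * ‖b‖ := by
  have hd1 : ‖d‖ < 1 := hd.trans_lt (by norm_num)
  have ha : IsUnit a := isUnit_iff_exists_and_exists.mpr
    ⟨⟨b * ↑(Units.oneSub d hd1)⁻¹, by rw [← mul_assoc, hab]; exact (Units.oneSub d hd1).mul_inv⟩,
     ⟨↑(Units.oneSub d' hd')⁻¹ * b, by rw [mul_assoc, hba]; exact (Units.oneSub d' hd').inv_mul⟩⟩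
  refine ⟨ha.unit, rfl, ?_⟩
  set v : R := ↑ha.unit⁻¹
  -- `v * (1 - d) = v * a * b = b`
  have hv : v = b + v * d := by
    rw [← sub_eq_iff_eq_add, ← mul_one_sub, ← hab, ← mul_assoc, ha.val_inv_mul, one_mul]
  have : ‖v‖ ≤ ‖b‖ + ‖v‖ * (1 / 2) := calc
    ‖v‖ = ‖b + v * d‖ := congrArg _ hv
    _ ≤ ‖b‖ + ‖v‖ * ‖d‖ := (norm_add_le _ _).trans (by gcongr; exact norm_mul_le _ _)
    _ ≤ ‖b‖ + ‖v‖ * (1 / 2) := by gcongr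
  linarith

namespace ContinuousLinearMap

variable {𝕜 E F : Type*} [NontriviallyNormedField 𝕜] [NormedAddCommGroup E] [NormedSpace 𝕜 E]
  [NormedAddCommGroup F] [NormedSpace 𝕜 F]

theorem exists_forall_norm_le_of_tendsto [CompleteSpace E] {A : ℕ → E →L[𝕜] F} {f : E → F}
    (hA : ∀ x, Tendsto (fun n => A n x) atTop (𝓝 (f x))) : ∃ C, ∀ n, ‖A n‖ ≤ C :=
  banach_steinhaus fun x => by
    obtain ⟨C, hC⟩ := isBounded_iff_forall_norm_le.mp (isBounded_range_of_tendsto _ (hA x))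
    exact ⟨C, fun n => hC _ ⟨n, rfl⟩⟩

theorem tendstoUniformlyOn_of_tendsto_of_norm_le {ι : Type*} {A : ι → E →L[𝕜] F} {f : E → F}
    {l : Filter ι} {K : Set E} (hK : IsCompact K) {C : ℝ} (hC : ∀ i, ‖A i‖ ≤ C)
    (hA : ∀ x, Tendsto (fun i => A i x) l (𝓝 (f x))) :
    TendstoUniformlyOn (fun i => ⇑(A i)) f l K := by
  have hA_eq : Equicontinuous ((↑) ∘ A) :=
    ((NormedSpace.equicontinuous_TFAE A).out 1 5).mpr (⟨C, hC⟩ : ∃ C, ∀ i, ‖A i‖ ≤ C)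
  have := (EquicontinuousOn.tendsto_uniformOnFun_iff_pi' (𝔖 := {K}) (by simpa using hK)
    (by simpa using hA_eq.equicontinuousOn K) l f).mpr
    (by simpa [tendsto_pi_nhds] using fun x _ => hA x)
  exact UniformOnFun.tendsto_iff_tendstoUniformlyOn.mp this K rfl

theorem tendsto_apply_apply [CompleteSpace E] {A : ℕ → E →L[𝕜] F} {A₀ : E →L[𝕜] F}
    (hA : ∀ x, Tendsto (fun n => A n x) atTop (𝓝 (A₀ x))) {x : ℕ → E} {x₀ : E}
    (hx : Tendsto x atTop (𝓝 x₀)) : Tendsto (fun n => A n (x n)) atTop (𝓝 (A₀ x₀)) := by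
  obtain ⟨C, hC⟩ := exists_forall_norm_le_of_tendsto hA
  refine (tendstoUniformlyOn_of_tendsto_of_norm_le hx.isCompact_insert_range hC hA).tendsto_comp
    A₀.continuous.continuousWithinAt (tendsto_nhdsWithin_iff.mpr ⟨hx, ?_⟩)
  exact Eventually.of_forall fun n => mem_insert_of_mem _ ⟨n, rfl⟩

theorem mapsTo_comp_closedBall {A : E →L[𝕜] F} {P : E →L[𝕜] E} {S : Set F} {c : 𝕜}
    (hc : c ≠ 0) (hA : MapsTo A (closedBall 0 1) S) (hP : ‖P‖ ≤ ‖c‖) :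
    MapsTo (A ∘L P) (closedBall 0 1) (c • S) := by
  intro u hu
  refine ⟨A (c⁻¹ • P u), hA ?_, by simp only [map_smul, smul_inv_smul₀ hc]; rfl⟩
  rw [mem_closedBall_zero_iff] at hu ⊢
  calc ‖c⁻¹ • P u‖ ≤ ‖c‖⁻¹ * (‖P‖ * ‖u‖) := by
        rw [norm_smul, norm_inv]; gcongr; exact P.le_opNorm u
    _ ≤ ‖c‖⁻¹ * (‖c‖ * 1) := by gcongr
    _ = 1 := by field_simp

end ContinuousLinearMap

section CollectivelyCompact

variable {𝕜 E : Type*} [RCLike 𝕜] [NormedAddCommGroup E] [NormedSpace 𝕜 E] [CompleteSpace E]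
  {G : ℕ → E →L[𝕜] E} {F : E →L[𝕜] E} {K : Set E}

theorem tendsto_sub_mul_mul_of_mapsTo_closedBall (hK : IsCompact K)
    (hGK : ∀ᶠ N in atTop, MapsTo (G N) (closedBall 0 1) K)
    (hG : ∀ x, Tendsto (fun N => G N x) atTop (𝓝 (F x))) (L : E →L[𝕜] E) :
    Tendsto (fun N => (G N - F) * L * G N) atTop (𝓝 0) := by
  obtain ⟨C, hC⟩ := ContinuousLinearMap.exists_forall_norm_le_of_tendsto hG
  have hunif := Metric.tendstoUniformlyOn_iff.mp
    (ContinuousLinearMap.tendstoUniformlyOn_of_tendsto_of_norm_le (hK.image L.continuous) hC hG)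
  rw [NormedAddGroup.tendsto_nhds_zero]
  intro ε hε
  filter_upwards [hunif (ε / 2) (half_pos hε), hGK] with N hN hNK
  refine lt_of_le_of_lt (ContinuousLinearMap.opNorm_le_of_unit_norm (half_pos hε).le
    fun x hx => ?_) (half_lt_self hε)
  have hx' : x ∈ closedBall (0 : E) 1 := by simp [hx]
  simpa [dist_eq_norm'] using (hN _ ⟨_, hNK hx', rfl⟩).le

theorem eventually_exists_unit_smul_one_sub_of_mapsTo_closedBall (hK : IsCompact K)
    (hGK : ∀ᶠ N in atTop, MapsTo (G N) (closedBall 0 1) K)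
    (hG : ∀ x, Tendsto (fun N => G N x) atTop (𝓝 (F x))) {c : 𝕜} (hc : c ≠ 0)
    (hF : IsUnit (c • 1 - F)) :
    ∃ C, ∀ᶠ N in atTop, ∃ u : (E →L[𝕜] E)ˣ, (u : E →L[𝕜] E) = c • 1 - G N ∧
      ‖(↑u⁻¹ : E →L[𝕜] E)‖ ≤ C := by
  obtain ⟨T, hT⟩ := hF
  set S : E →L[𝕜] E := ↑T⁻¹
  obtain ⟨M, hM⟩ := ContinuousLinearMap.exists_forall_norm_le_of_tendsto hG
  have hd : Tendsto (fun N => c⁻¹ • ((G N - F) * S * G N)) atTop (𝓝 0) := by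
    simpa using (tendsto_sub_mul_mul_of_mapsTo_closedBall hK hGK hG S).const_smul c⁻¹
  have hd' : Tendsto (fun N => c⁻¹ • (S * ((G N - F) * G N))) atTop (𝓝 0) := by
    simpa [mul_assoc] using
      ((tendsto_sub_mul_mul_of_mapsTo_closedBall hK hGK hG 1).const_mul S).const_smul c⁻¹
  refine ⟨2 * (‖c⁻¹‖ * (‖(1 : E →L[𝕜] E)‖ + ‖S‖ * M)), ?_⟩
  filter_upwards [NormedAddGroup.tendsto_nhds_zero.mp hd (1 / 2) (by norm_num),
    NormedAddGroup.tendsto_nhds_zero.mp hd' 1 one_pos] with N hN hN'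
  obtain ⟨u, hu, hu_inv⟩ := exists_unit_eq_and_norm_inv_le_of_mul_eq_one_sub
    (smul_one_sub_mul_smul_one_add hc (by rw [← hT]; exact T.mul_inv) (G N))
    (smul_one_add_mul_smul_one_sub hc (by rw [← hT]; exact T.inv_mul) (G N)) hN.le hN'
  refine ⟨u, hu, hu_inv.trans ?_⟩
  gcongr
  calc ‖c⁻¹ • (1 + S * G N)‖ ≤ ‖c⁻¹‖ * (‖(1 : E →L[𝕜] E)‖ + ‖S‖ * ‖G N‖) := by
        rw [norm_smul]; gcongr; exact (norm_add_le _ _).trans (by gcongr; exact norm_mul_le _ _)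
    _ ≤ ‖c⁻¹‖ * (‖(1 : E →L[𝕜] E)‖ + ‖S‖ * M) := by gcongr; exact hM N

end CollectivelyCompact

theorem stmt_14_general
    {X : Type*} [NormedAddCommGroup X] [NormedSpace ℝ X] [CompleteSpace X]
    (F : X →L[ℝ] X)
    (lam : ℝ) (hlam : lam ≠ 0)
    (hFbij : Function.Bijective ⇑(lam • ContinuousLinearMap.id ℝ X - F))
    (Fn Pn : ℕ → X →L[ℝ] X)
    (hcc : IsCompact (closure {v : X | ∃ N ≥ 1, ∃ u : X, ‖u‖ ≤ 1 ∧ v = Fn N u}))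
    (hFconv : ∀ u : X, Tendsto (fun N => Fn N u) atTop (𝓝 (F u)))
    (cP : ℝ) (hcP : ∀ N, ‖Pn N‖ ≤ cP)
    (hPconv : ∀ u : X, Tendsto (fun N => Pn N u) atTop (𝓝 u)) :
    ∃ (N₀ : ℕ) (cI : ℝ), ∀ N ≥ N₀,
      Function.Bijective ⇑(lam • ContinuousLinearMap.id ℝ X - (Fn N).comp (Pn N)) ∧
      ∃ B : X →L[ℝ] X,
        (lam • ContinuousLinearMap.id ℝ X - (Fn N).comp (Pn N)).comp B
          = ContinuousLinearMap.id ℝ X ∧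
        B.comp (lam • ContinuousLinearMap.id ℝ X - (Fn N).comp (Pn N))
          = ContinuousLinearMap.id ℝ X ∧
        ‖B‖ ≤ cI := by
  have hc : max cP 1 ≠ 0 := (zero_lt_one.trans_le (le_max_right _ _)).ne'
  have hGK : ∀ᶠ N in atTop, MapsTo ((Fn N).comp (Pn N)) (closedBall 0 1)
      (max cP 1 • closure {v : X | ∃ N ≥ 1, ∃ u : X, ‖u‖ ≤ 1 ∧ v = Fn N u}) := by
    filter_upwards [eventually_ge_atTop 1] with N hN
    refine ContinuousLinearMap.mapsTo_comp_closedBall hc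
      (fun u hu => subset_closure ⟨N, hN, u, mem_closedBall_zero_iff.mp hu, rfl⟩) ?_
    rw [Real.norm_of_nonneg (zero_le_one.trans (le_max_right _ _))]
    exact (hcP N).trans (le_max_left _ _)
  obtain ⟨C, hC⟩ := eventually_exists_unit_smul_one_sub_of_mapsTo_closedBall (hcc.smul _) hGK
    (fun u => ContinuousLinearMap.tendsto_apply_apply hFconv (hPconv u)) hlam
    (ContinuousLinearMap.isUnit_iff_bijective.mpr hFbij)
  obtain ⟨N₀, hN₀⟩ := eventually_atTop.mp hC
  refine ⟨N₀, C, fun N hN => ?_⟩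
  obtain ⟨u, hu, hu_inv⟩ := hN₀ N hN
  rw [← ContinuousLinearMap.one_def, ← hu]
  exact ⟨ContinuousLinearMap.isUnit_iff_bijective.mp u.isUnit, ↑u⁻¹, u.mul_inv, u.inv_mul, hu_inv⟩

/-- under the hypotheses of the convergence theorem, for all sufficiently
large N the operator λI − F_N P_N is invertible with uniformly bounded inverse. -/
theorem stmt_14
    {X : Type*} [NormedAddCommGroup X] [NormedSpace ℝ X] [CompleteSpace X]
    (F : X →L[ℝ] X) (hFcompact : IsCompactOperator (⇑F))
    (lam : ℝ) (hlam : lam ≠ 0)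
    (hFbij : Function.Bijective ⇑(lam • ContinuousLinearMap.id ℝ X - F))
    (Fn Pn : ℕ → X →L[ℝ] X)
    (hcc : IsCompact (closure {v : X | ∃ N ≥ 1, ∃ u : X, ‖u‖ ≤ 1 ∧ v = Fn N u}))
    (hFconv : ∀ u : X, Tendsto (fun N => Fn N u) atTop (𝓝 (F u)))
    (cP : ℝ) (hcP : ∀ N, ‖Pn N‖ ≤ cP)
    (hPconv : ∀ u : X, Tendsto (fun N => Pn N u) atTop (𝓝 u)) :
    ∃ (N₀ : ℕ) (cI : ℝ), ∀ N ≥ N₀,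
      Function.Bijective ⇑(lam • ContinuousLinearMap.id ℝ X - (Fn N).comp (Pn N)) ∧
      ∃ B : X →L[ℝ] X,
        (lam • ContinuousLinearMap.id ℝ X - (Fn N).comp (Pn N)).comp B
          = ContinuousLinearMap.id ℝ X ∧
        B.comp (lam • ContinuousLinearMap.id ℝ X - (Fn N).comp (Pn N))
          = ContinuousLinearMap.id ℝ X ∧
        ‖B‖ ≤ cI :=
  stmt_14_general F lam hlam hFbij Fn Pn hcc hFconv cP hcP hPconv
end

section
/- Let X be a real Banach space, let F, F_N, P_N be bounded linear operators on X with ‖F_N‖ ≤ c_F and ‖P_N‖ ≤ c_P, and let λ ≠ 0 be a real number such that λI − F_N P_N is a bijection of X onto X with ‖(λI − F_N P_N)^{-1}‖ ≤ c_I. Let f, u, v_N ∈ X satisfy (λI − F) u = f and (λI − F_N P_N) v_N = f. If û ∈ X satisfies P_N û = û and ‖u − û‖ ≤ ε, then ‖u − v_N‖ ≤ c_I ( ‖F u − F_N u‖ + c_F (1 + c_P) ε ). -/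
/-!
Write `A = λ I - F_N P_N`. Subtracting the two equations gives the residual identity
`A (u - v_N) = F u - F_N P_N u = (F u - F_N u) + F_N (u - P_N u)`, so `‖u - v_N‖ ≤ c_I ‖A (u - v_N)‖`.
Since `P_N` fixes `û`, `u - P_N u = (u - û) - P_N (u - û)`, whence `‖u - P_N u‖ ≤ (1 + c_P) ε`.
-/

namespace ContinuousLinearMap

variable {𝕜 E G : Type*} [NontriviallyNormedField 𝕜]
  [NormedAddCommGroup E] [NormedSpace 𝕜 E] [NormedAddCommGroup G] [NormedSpace 𝕜 G]

theorem norm_le_of_comp_eq_id {A : E →L[𝕜] G} {B : G →L[𝕜] E} {c : ℝ}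
    (hBA : B.comp A = ContinuousLinearMap.id 𝕜 E) (hB : ‖B‖ ≤ c) (x : E) : ‖x‖ ≤ c * ‖A x‖ := by
  have hx : B (A x) = x := DFunLike.congr_fun hBA x
  simpa only [hx] using B.le_of_opNorm_le hB (A x)

theorem norm_sub_apply_le_of_apply_eq_self (P : E →L[𝕜] E) {u w : E} (hw : P w = w) :
    ‖u - P u‖ ≤ (1 + ‖P‖) * ‖u - w‖ := by
  have hsplit : u - P u = (u - w) - P (u - w) := by rw [map_sub, hw]; abel
  calc ‖u - P u‖ ≤ ‖u - w‖ + ‖P (u - w)‖ := hsplit ▸ norm_sub_le _ _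
    _ ≤ ‖u - w‖ + ‖P‖ * ‖u - w‖ := by gcongr; exact P.le_opNorm _
    _ = (1 + ‖P‖) * ‖u - w‖ := by ring

theorem smul_id_sub_apply_sub_of_apply_eq (lam : 𝕜) {K L : E →L[𝕜] E} {f u v : E}
    (hu : (lam • ContinuousLinearMap.id 𝕜 E - K) u = f)
    (hv : (lam • ContinuousLinearMap.id 𝕜 E - L) v = f) :
    (lam • ContinuousLinearMap.id 𝕜 E - L) (u - v) = K u - L u := by
  rw [map_sub, hv, ← hu]
  simp only [sub_apply, smul_apply]
  abel

end ContinuousLinearMap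

theorem stmt_15_general
    {X : Type*} [NormedAddCommGroup X] [NormedSpace ℝ X]
    (F Fn Pn : X →L[ℝ] X) (cF cP cI : ℝ)
    (hF : ‖Fn‖ ≤ cF) (hP : ‖Pn‖ ≤ cP)
    (lam : ℝ)
    (B : X →L[ℝ] X)
    (hB2 : B.comp (lam • ContinuousLinearMap.id ℝ X - Fn.comp Pn) = ContinuousLinearMap.id ℝ X)
    (hB : ‖B‖ ≤ cI)
    (f u vN uhat : X)
    (hu : (lam • ContinuousLinearMap.id ℝ X - F) u = f)
    (hv : (lam • ContinuousLinearMap.id ℝ X - Fn.comp Pn) vN = f)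
    (hhat : Pn uhat = uhat)
    (ε : ℝ) (hε : ‖u - uhat‖ ≤ ε) :
    ‖u - vN‖ ≤ cI * (‖F u - Fn u‖ + cF * (1 + cP) * ε) := by
  have hcI : 0 ≤ cI := (norm_nonneg _).trans hB
  have hresidual : F u - (Fn.comp Pn) u = (F u - Fn u) + Fn (u - Pn u) := by
    rw [map_sub, ContinuousLinearMap.comp_apply]; abel
  have hproj : ‖u - Pn u‖ ≤ (1 + cP) * ε :=
    calc ‖u - Pn u‖ ≤ (1 + ‖Pn‖) * ‖u - uhat‖ := Pn.norm_sub_apply_le_of_apply_eq_self hhat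
      _ ≤ (1 + cP) * ε := by gcongr; linarith [norm_nonneg Pn]
  calc ‖u - vN‖ ≤ cI * ‖(lam • ContinuousLinearMap.id ℝ X - Fn.comp Pn) (u - vN)‖ :=
        ContinuousLinearMap.norm_le_of_comp_eq_id hB2 hB _
    _ = cI * ‖(F u - Fn u) + Fn (u - Pn u)‖ := by
      rw [ContinuousLinearMap.smul_id_sub_apply_sub_of_apply_eq lam hu hv, hresidual]
    _ ≤ cI * (‖F u - Fn u‖ + cF * ((1 + cP) * ε)) := by
      gcongr
      refine (norm_add_le _ _).trans (add_le_add_right ?_ _)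
      exact (Fn.le_of_opNorm_le hF _).trans (by gcongr; exact (norm_nonneg _).trans hF)
    _ = cI * (‖F u - Fn u‖ + cF * (1 + cP) * ε) := by ring

/-- error bound for the iterated discrete collocation solution v_N:
‖u − v_N‖ ≤ c_I (‖Fu − F_N u‖ + c_F (1 + c_P) ε). -/
theorem stmt_15
    {X : Type*} [NormedAddCommGroup X] [NormedSpace ℝ X] [CompleteSpace X]
    (F Fn Pn : X →L[ℝ] X) (cF cP cI : ℝ)
    (hF : ‖Fn‖ ≤ cF) (hP : ‖Pn‖ ≤ cP)
    (lam : ℝ) (hlam : lam ≠ 0)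
    (B : X →L[ℝ] X)
    (hB1 : (lam • ContinuousLinearMap.id ℝ X - Fn.comp Pn).comp B = ContinuousLinearMap.id ℝ X)
    (hB2 : B.comp (lam • ContinuousLinearMap.id ℝ X - Fn.comp Pn) = ContinuousLinearMap.id ℝ X)
    (hB : ‖B‖ ≤ cI)
    (f u vN uhat : X)
    (hu : (lam • ContinuousLinearMap.id ℝ X - F) u = f)
    (hv : (lam • ContinuousLinearMap.id ℝ X - Fn.comp Pn) vN = f)
    (hhat : Pn uhat = uhat)
    (ε : ℝ) (hε : ‖u - uhat‖ ≤ ε) :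
    ‖u - vN‖ ≤ cI * (‖F u - Fn u‖ + cF * (1 + cP) * ε) :=
  stmt_15_general F Fn Pn cF cP cI hF hP lam B hB2 hB f u vN uhat hu hv hhat ε hε
end

section
/- Let X be a real Banach space, let F, F_N, P_N be bounded linear operators on X with ‖F_N‖ ≤ c_F and ‖P_N‖ ≤ c_P, and let λ ≠ 0 be a real number such that λI − F_N P_N is a bijection of X onto X with ‖(λI − F_N P_N)^{-1}‖ ≤ c_I. Let f, u, v_N ∈ X satisfy (λI − F) u = f and (λI − F_N P_N) v_N = f, and set u_N := P_N v_N. If û ∈ X satisfies P_N û = û and ‖u − û‖ ≤ ε, then ‖u − u_N‖ ≤ ‖u − P_N u‖ + c_P ‖u − v_N‖ ≤ (1 + c_P) ε + c_P c_I ( ‖F u − F_N u‖ + c_F (1 + c_P) ε ). -/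
/-!
The MLS approximant `û` is fixed by `P_N`, so `u - P_N u = (u - û) - P_N (u - û)` is of size
`(1 + c_P) ε`. Subtracting the two equations `(λ - F) u = f` and `(λ - F_N P_N) v_N = f` gives
`(λ - F_N P_N) (u - v_N) = F u - F_N P_N u`, so `u - v_N` is the image of this consistency error
under the inverse, and `F u - F_N P_N u = (F u - F_N u) + F_N (u - P_N u)`.
-/

namespace ContinuousLinearMap

variable {𝕜 E G : Type*} [NontriviallyNormedField 𝕜]
  [NormedAddCommGroup E] [NormedSpace 𝕜 E] [NormedAddCommGroup G] [NormedSpace 𝕜 G]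

theorem norm_sub_apply_le (T : E →L[𝕜] G) (x : G) (u w : E) :
    ‖x - T w‖ ≤ ‖x - T u‖ + ‖T‖ * ‖u - w‖ :=
  calc ‖x - T w‖ = ‖(x - T u) + T (u - w)‖ := by rw [map_sub, sub_add_sub_cancel]
    _ ≤ ‖x - T u‖ + ‖T‖ * ‖u - w‖ := (norm_add_le _ _).trans (by gcongr; exact T.le_opNorm _)

theorem norm_sub_apply_self_le_of_apply_eq (P : E →L[𝕜] E) {u û : E} (hû : P û = û) :
    ‖u - P u‖ ≤ (1 + ‖P‖) * ‖u - û‖ :=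
  calc ‖u - P u‖ ≤ ‖u - P û‖ + ‖P‖ * ‖û - u‖ := P.norm_sub_apply_le u û u
    _ = (1 + ‖P‖) * ‖u - û‖ := by rw [hû, norm_sub_rev û]; ring

theorem sub_eq_apply_sub_of_comp_eq_id {A A' B : E →L[𝕜] E}
    (hBA : B.comp A = ContinuousLinearMap.id 𝕜 E) {f u v : E} (hu : A' u = f) (hv : A v = f) : u - v = B (A u - A' u) := by
  rw [hu, ← hv, ← map_sub, ← comp_apply, hBA, id_apply]

end ContinuousLinearMap

open ContinuousLinearMap in
theorem stmt_16_general
    {X : Type*} [NormedAddCommGroup X] [NormedSpace ℝ X]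
    (F Fn Pn : X →L[ℝ] X) (cF cP cI : ℝ)
    (hF : ‖Fn‖ ≤ cF) (hP : ‖Pn‖ ≤ cP)
    (lam : ℝ)
    (B : X →L[ℝ] X)
    (hB2 : B.comp (lam • ContinuousLinearMap.id ℝ X - Fn.comp Pn) = ContinuousLinearMap.id ℝ X)
    (hB : ‖B‖ ≤ cI)
    (f u vN uhat : X)
    (hu : (lam • ContinuousLinearMap.id ℝ X - F) u = f)
    (hv : (lam • ContinuousLinearMap.id ℝ X - Fn.comp Pn) vN = f)
    (hhat : Pn uhat = uhat)
    (ε : ℝ) (hε : ‖u - uhat‖ ≤ ε) :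
    ‖u - Pn vN‖ ≤ ‖u - Pn u‖ + cP * ‖u - vN‖ ∧
    ‖u - Pn u‖ + cP * ‖u - vN‖ ≤
      (1 + cP) * ε + cP * cI * (‖F u - Fn u‖ + cF * (1 + cP) * ε) := by
  have hcP : 0 ≤ cP := (norm_nonneg _).trans hP
  have hcF : 0 ≤ cF := (norm_nonneg _).trans hF
  have hcI : 0 ≤ cI := (norm_nonneg _).trans hB
  have hproj : ‖u - Pn u‖ ≤ (1 + cP) * ε :=
    (Pn.norm_sub_apply_self_le_of_apply_eq hhat).trans (by gcongr)
  have hres : u - vN = B (F u - Fn (Pn u)) := by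
    rw [sub_eq_apply_sub_of_comp_eq_id hB2 hu hv]
    congr 1
    simp only [sub_apply, smul_apply, id_apply, comp_apply]
    abel
  have hvN : ‖u - vN‖ ≤ cI * (‖F u - Fn u‖ + cF * ((1 + cP) * ε)) :=
    calc ‖u - vN‖ ≤ ‖B‖ * ‖F u - Fn (Pn u)‖ := hres ▸ B.le_opNorm _
      _ ≤ cI * (‖F u - Fn u‖ + cF * ((1 + cP) * ε)) := by
        gcongr
        exact (Fn.norm_sub_apply_le _ u _).trans (by gcongr)
  constructor
  · exact (Pn.norm_sub_apply_le u u vN).trans (by gcongr)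
  calc ‖u - Pn u‖ + cP * ‖u - vN‖
      ≤ (1 + cP) * ε + cP * (cI * (‖F u - Fn u‖ + cF * ((1 + cP) * ε))) := by gcongr
    _ = (1 + cP) * ε + cP * cI * (‖F u - Fn u‖ + cF * (1 + cP) * ε) := by ring

/-- error bound for the discrete collocation solution u_N = P_N v_N:
‖u − u_N‖ ≤ ‖u − P_N u‖ + c_P ‖u − v_N‖ ≤ (1 + c_P) ε + c_P c_I (‖Fu − F_N u‖ + c_F (1 + c_P) ε). -/
theorem stmt_16
    {X : Type*} [NormedAddCommGroup X] [NormedSpace ℝ X] [CompleteSpace X]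
    (F Fn Pn : X →L[ℝ] X) (cF cP cI : ℝ)
    (hF : ‖Fn‖ ≤ cF) (hP : ‖Pn‖ ≤ cP)
    (lam : ℝ) (hlam : lam ≠ 0)
    (B : X →L[ℝ] X)
    (hB1 : (lam • ContinuousLinearMap.id ℝ X - Fn.comp Pn).comp B = ContinuousLinearMap.id ℝ X)
    (hB2 : B.comp (lam • ContinuousLinearMap.id ℝ X - Fn.comp Pn) = ContinuousLinearMap.id ℝ X)
    (hB : ‖B‖ ≤ cI)
    (f u vN uhat : X)
    (hu : (lam • ContinuousLinearMap.id ℝ X - F) u = f)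
    (hv : (lam • ContinuousLinearMap.id ℝ X - Fn.comp Pn) vN = f)
    (hhat : Pn uhat = uhat)
    (ε : ℝ) (hε : ‖u - uhat‖ ≤ ε) :
    ‖u - Pn vN‖ ≤ ‖u - Pn u‖ + cP * ‖u - vN‖ ∧
    ‖u - Pn u‖ + cP * ‖u - vN‖ ≤
      (1 + cP) * ε + cP * cI * (‖F u - Fn u‖ + cF * (1 + cP) * ε) :=
  stmt_16_general F Fn Pn cF cP cI hF hP lam B hB2 hB f u vN uhat hu hv hhat ε hε
end
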